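/- arXiv:1906.00381 — 7 statements merged into one kernel-verified Lean document; each statement's English description precedes it below -/
import Mathlib

section
/- Let p ≥ 5 be a prime and let m ≥ 2 be an integer. Then d(pm − 1, p, (p−1)/2) = (m − 2)/4. -/
/-!
Write `p = 2i + 1`. The recursion runs through `(pm - 1, p) → (p, p - 1) → (p - 1, 1) → (1, 0)`
with the index `i` unchanged until the last step, and since `2i + 1 = p` each numerator
`(2i + 1 - a - b)²` collapses to a square of `pm - 1`, `p - 1` or `0`. The three steps contribute
`-1/4 + (pm - 1)/(4p)`, `-1/4 + (p - 1)/(4p)` and `-1/4` with alternating signs,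
which sum to `(m - 2)/4`.
-/

/-- Ozsváth–Szabó's recursive formula for the correction terms (d-invariants)
`d(L(p,q), i)` of lens spaces: `d(p, 0, i) = 0` and, for `q ≥ 1`,
`d(p, q, i) = -1/4 + (2i + 1 - p - q)^2 / (4pq) - d(q, p mod q, i mod q)`. -/
def lensD (p q i : ℕ) : ℚ :=
  if h : q = 0 then 0
  else -1/4 + ((2 * i + 1 - p - q : ℚ)) ^ 2 / (4 * p * q)
       - lensD q (p % q) (i % q)
termination_by q
decreasing_by exact Nat.mod_lt _ (Nat.pos_of_ne_zero h)

theorem lensD_zero_right (p i : ℕ) : lensD p 0 i = 0 := by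
  rw [lensD, dif_pos rfl]

theorem lensD_of_ne_zero {q : ℕ} (p i : ℕ) (hq : q ≠ 0) :
    lensD p q i = -1/4 + ((2 * i + 1 - p - q : ℚ)) ^ 2 / (4 * p * q)
      - lensD q (p % q) (i % q) := by
  rw [lensD, dif_neg hq]

theorem lensD_one_right (p i : ℕ) : lensD p 1 i = -1/4 + ((2 * i - p : ℚ)) ^ 2 / (4 * p) := by
  rw [lensD_of_ne_zero p i one_ne_zero, Nat.mod_one, lensD_zero_right]
  push_cast
  ring_nf

theorem lensD_two_mul_add_one_two_mul {i : ℕ} (hi : 0 < i) :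
    lensD (2 * i + 1) (2 * i) i = i / (2 * (2 * i + 1)) := by
  have hmod : (2 * i + 1) % (2 * i) = 1 := by
    rw [Nat.add_mod_left, Nat.mod_eq_of_lt (by omega)]
  rw [lensD_of_ne_zero _ _ (by omega), hmod, Nat.mod_eq_of_lt (by omega : i < 2 * i),
    lensD_one_right]
  have hi' : (i : ℚ) ≠ 0 := by positivity
  push_cast
  field_simp
  ring

theorem lensD_mul_sub_one_two_mul_add_one {i m : ℕ} (hi : 0 < i) (hm : 0 < m) :
    lensD ((2 * i + 1) * m - 1) (2 * i + 1) i = ((m : ℚ) - 2) / 4 := by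
  have hmul : (2 * i + 1) * m - 1 = (2 * i + 1) * (m - 1) + 2 * i := by
    obtain ⟨k, rfl⟩ := Nat.exists_eq_succ_of_ne_zero hm.ne'
    rw [Nat.succ_sub_one, Nat.mul_succ]
    omega
  have hmod : ((2 * i + 1) * m - 1) % (2 * i + 1) = 2 * i := by
    rw [hmul, Nat.mul_add_mod, Nat.mod_eq_of_lt (by omega)]
  have hcast : (((2 * i + 1) * m - 1 : ℕ) : ℚ) = (2 * i + 1) * m - 1 := by
    rw [Nat.cast_sub (Nat.one_le_iff_ne_zero.mpr (by positivity))]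
    push_cast
    ring
  rw [lensD_of_ne_zero _ _ (by omega), hmod, Nat.mod_eq_of_lt (by omega : i < 2 * i + 1),
    lensD_two_mul_add_one_two_mul hi, hcast]
  have hN : (2 * i + 1 : ℚ) * m - 1 ≠ 0 := by
    rw [← hcast, Nat.cast_ne_zero]
    omega
  push_cast
  field_simp
  ring

/-- For `p ≥ 5` prime and `m ≥ 2`, `d(pm - 1, p, (p-1)/2) = (m - 2)/4`. -/
theorem lensD_pm_sub_one (p m : ℕ) (hp : p.Prime) (hp5 : 5 ≤ p) (hm : 2 ≤ m) :
    lensD (p * m - 1) p ((p - 1) / 2) = ((m : ℚ) - 2) / 4 := by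
  obtain ⟨i, rfl⟩ := hp.odd_of_ne_two (by omega)
  have hi : (2 * i + 1 - 1) / 2 = i := by omega
  rw [hi]
  exact lensD_mul_sub_one_two_mul_add_one (by omega) (by omega)
end

section
/- Let p ≥ 5 be a prime and let m ≥ 2 be an integer. Then d(pm − 1, p, (3p−1)/2) = (pm² − (6p+1)m + 4p + 6)/(4(pm−1)). -/
/-- For `p ≥ 5` prime and `m ≥ 2`,
`d(pm - 1, p, (3p-1)/2) = (pm² - (6p+1)m + 4p + 6) / (4(pm-1))`. -/
theorem lensD_pm_sub_one' (p m : ℕ) (hp : p.Prime) (hp5 : 5 ≤ p) (hm : 2 ≤ m) :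
    lensD (p * m - 1) p ((3 * p - 1) / 2) =
      ((p : ℚ) * m ^ 2 - (6 * p + 1) * m + 4 * p + 6) / (4 * ((p : ℚ) * m - 1)) := by
  obtain ⟨k, hk⟩ : ∃ k, p = 2 * k + 1 := by
    rcases hp.eq_two_or_odd' with h2 | ⟨k, hk⟩
    · omega
    · exact ⟨k, hk⟩
  subst hk
  have hk2 : 2 ≤ k := by omega
  obtain ⟨n, rfl⟩ : ∃ n, m = n + 1 := ⟨m - 1, by omega⟩
  have e1 : (3 * (2 * k + 1) - 1) / 2 = 3 * k + 1 := by omega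
  have e2 : ((2 * k + 1) * (n + 1) - 1) % (2 * k + 1) = 2 * k := by
    have h : (2 * k + 1) * (n + 1) - 1 = 2 * k + (2 * k + 1) * n := by
      have hh : (2 * k + 1) * (n + 1) = (2 * k + 1) * n + (2 * k + 1) := by ring
      omega
    rw [h, Nat.add_mul_mod_self_left, Nat.mod_eq_of_lt (by omega)]
  have e3 : (3 * k + 1) % (2 * k + 1) = k := by
    have h : 3 * k + 1 = (2 * k + 1) + k := by omega
    rw [h, Nat.add_mod_left, Nat.mod_eq_of_lt (by omega)]
  have e4 : (2 * k + 1) % (2 * k) = 1 := by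
    rw [Nat.add_mod_left, Nat.mod_eq_of_lt (by omega)]
  have e5 : k % (2 * k) = k := Nat.mod_eq_of_lt (by omega)
  have esub : ((2 * k + 1) * (n + 1) - 1 : ℕ) = 2 * k + (2 * k + 1) * n := by
    have hh : (2 * k + 1) * (n + 1) = (2 * k + 1) * n + (2 * k + 1) := by ring
    omega
  have hkQ : (0 : ℚ) < (k : ℚ) := by exact_mod_cast (show 0 < k by omega)
  have L1 : lensD (2 * k) 1 k = -1/4 := by
    rw [lensD]
    simp only [Nat.mod_one]
    rw [lensD]
    simp only [dif_pos rfl]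
    push_cast
    ring
  have L2 : lensD (2 * k + 1) (2 * k) k = (2 * (k : ℚ)) / (4 * (2 * k + 1)) := by
    rw [lensD]
    simp only [e4, e5, L1]
    rw [dif_neg (by omega)]
    have h1 : ((2 * k + 1 : ℕ) : ℚ) = 2 * k + 1 := by push_cast; ring
    field_simp
    push_cast
    ring
  rw [e1, lensD, dif_neg (by omega : ¬ (2 * k + 1 = 0)), e2, e3, esub, L2]
  have hQ : (0 : ℚ) < 2 * (k : ℚ) + (2 * (k : ℚ) + 1) * n := by positivity
  have hne : ((2 * (k : ℚ) + 1) * (n + 1) - 1) ≠ 0 := by nlinarith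
  push_cast
  field_simp
  ring
end

section
/- Let p ≥ 5 be a prime and let m ≥ 3 be an odd integer. Then there is no integer j with 0 ≤ j ≤ pm − 1 satisfying j² − pm·j + pm + p = 0. -/
/-! On the integers, `j * (N - j)` is at most `N - 1` when `j ≤ 1` or `j ≥ N - 1`, and at least
`2 * (N - 2)` when `2 ≤ j ≤ N - 2`. With `N = pm` the equation reads `j * (N - j) = N + p`, and
`N - 1 < N + p < 2 * (N - 2)` as soon as `p * (m - 1) > 4`. -/

theorem Int.mul_sub_ne_of_lt_of_lt {N c : ℤ} (h₁ : N - 1 < c) (h₂ : c < 2 * (N - 2)) (j : ℤ) :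
    j * (N - j) ≠ c := by
  rintro rfl
  by_cases hmid : 2 ≤ j ∧ j ≤ N - 2
  · nlinarith [mul_nonneg (sub_nonneg.2 hmid.1) (sub_nonneg.2 hmid.2)]
  · have hout : 0 ≤ (j - 1) * (j - (N - 1)) := by
      rcases le_or_gt j 1 with hj | hj
      · exact mul_nonneg_of_nonpos_of_nonpos (by linarith) (by omega)
      · exact mul_nonneg (by linarith) (by omega)
    nlinarith

theorem no_root_eq25_general (p m : ℤ) (hp5 : 5 ≤ p)
    (hm : 3 ≤ m) :
    ¬ ∃ j : ℤ, 0 ≤ j ∧ j ≤ p * m - 1 ∧ j ^ 2 - p * m * j + p * m + p = 0 := by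
  rintro ⟨j, -, -, hj⟩
  have hc : p * m + p < 2 * (p * m - 2) := by nlinarith
  exact Int.mul_sub_ne_of_lt_of_lt (by linarith) hc j (by linear_combination -hj)

/-- Equation (25): for `p ≥ 5` prime and `m ≥ 3` odd, the quadratic
`j² - pm·j + pm + p` has no integer root in `[0, pm-1]`. -/
theorem no_root_eq25 (p m : ℤ) (hp : Prime p) (hp5 : 5 ≤ p)
    (hm : 3 ≤ m) (hmodd : Odd m) :
    ¬ ∃ j : ℤ, 0 ≤ j ∧ j ≤ p * m - 1 ∧ j ^ 2 - p * m * j + p * m + p = 0 :=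
  no_root_eq25_general p m hp5 hm
end

section
/- Let p ≥ 5 be a prime and let m ≥ 2 be an even integer. Then there is no integer j with 0 ≤ j ≤ pm − 2 satisfying j² − (pm−1)·j + p + 1 − pm = 0. -/
theorem sq_sub_mul_nonpos {R : Type*} [CommRing R] [LinearOrder R] [IsStrictOrderedRing R]
    {n j : R} (hj0 : 0 ≤ j) (hjn : j ≤ n) : j ^ 2 - n * j ≤ 0 := by
  have : 0 ≤ j * (n - j) := mul_nonneg hj0 (sub_nonneg.mpr hjn)
  linarith [this, sq j]

theorem no_root_k1_case_a_general (p m : ℤ) (hp5 : 5 ≤ p)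
    (hm : 2 ≤ m) :
    ¬ ∃ j : ℤ, 0 ≤ j ∧ j ≤ p * m - 2 ∧
      j ^ 2 - (p * m - 1) * j + p + 1 - p * m = 0 := by
  rintro ⟨j, hj0, hj, hroot⟩
  have hquad : j ^ 2 - (p * m - 1) * j ≤ 0 := sq_sub_mul_nonpos hj0 (by linarith)
  have hconst : p + 1 - p * m < 0 := by nlinarith
  linarith

/-- For `p ≥ 5` prime and `m ≥ 2` even, the quadratic
`j² - (pm-1)·j + p + 1 - pm` has no integer root in `[0, pm-2]`. -/
theorem no_root_k1_case_a (p m : ℤ) (hp : Prime p) (hp5 : 5 ≤ p)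
    (hm : 2 ≤ m) (hmeven : Even m) :
    ¬ ∃ j : ℤ, 0 ≤ j ∧ j ≤ p * m - 2 ∧
      j ^ 2 - (p * m - 1) * j + p + 1 - p * m = 0 :=
  no_root_k1_case_a_general p m hp5 hm
end

section
/- Let p ≥ 5 be a prime and let q ≥ 2 be an even integer. Then there is no integer j with 0 ≤ j ≤ pq satisfying j² − (pq+1)·j + p − pq − 1 = 0. -/
theorem sq_sub_mul_add_sub_neg_of_nonneg_of_le {R : Type*} [CommRing R] [LinearOrder R]
    [IsStrictOrderedRing R] {p q j : R} (hp : 0 ≤ p) (hq : 1 ≤ q) (hj : 0 ≤ j)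
    (hjpq : j ≤ p * q) :
    j ^ 2 - (p * q + 1) * j + p - p * q - 1 < 0 := by
  have hprod : j * (j - (p * q + 1)) ≤ 0 := mul_nonpos_of_nonneg_of_nonpos hj (by linarith)
  have hconst : p * (1 - q) ≤ 0 := mul_nonpos_of_nonneg_of_nonpos hp (by linarith)
  calc j ^ 2 - (p * q + 1) * j + p - p * q - 1 = j * (j - (p * q + 1)) + p * (1 - q) - 1 := by
        ring
    _ < 0 := by linarith

theorem no_root_k1_neg_case_a_general (p q : ℤ) (hp5 : 5 ≤ p)
    (hq : 2 ≤ q) :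
    ¬ ∃ j : ℤ, 0 ≤ j ∧ j ≤ p * q ∧
      j ^ 2 - (p * q + 1) * j + p - p * q - 1 = 0 := by
  rintro ⟨j, hj, hjpq, hroot⟩
  exact (sq_sub_mul_add_sub_neg_of_nonneg_of_le (by omega) (by omega) hj hjpq).ne hroot

/-- For `p ≥ 5` prime and `q ≥ 2` even, the quadratic
`j² - (pq+1)·j + p - pq - 1` has no integer root in `[0, pq]`. -/
theorem no_root_k1_neg_case_a (p q : ℤ) (hp : Prime p) (hp5 : 5 ≤ p)
    (hq : 2 ≤ q) (hqeven : Even q) :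
    ¬ ∃ j : ℤ, 0 ≤ j ∧ j ≤ p * q ∧
      j ^ 2 - (p * q + 1) * j + p - p * q - 1 = 0 :=
  no_root_k1_neg_case_a_general p q hp5 hq
end

section
/- Let p ≥ 5 be a prime and let q ≥ 2 be an even integer. Then there is no integer j with 0 ≤ j ≤ pq satisfying j² − (pq+1)·j + p + pq + 1 = 0. -/
/-!
Writing `n = pq`, the equation says `j (n + 1 - j) = n + p + 1`. On `0 ≤ j ≤ n` the left side is
at most `n` at `j ∈ {0, 1, n}` and at least `2 (n - 1)` in between, while `n < n + p + 1 < 2 (n - 1)`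
because `n ≥ 2p > p + 3`.
-/

theorem Int.mul_add_one_sub_le_or_two_mul_sub_one_le {n j : ℤ} (hj0 : 0 ≤ j) (hjn : j ≤ n) :
    j * (n + 1 - j) ≤ n ∨ 2 * (n - 1) ≤ j * (n + 1 - j) := by
  rcases lt_or_ge j 2 with hj2 | hj2
  · left
    interval_cases j <;> linarith
  rcases eq_or_lt_of_le hjn with rfl | hjn
  · left
    linarith
  right
  nlinarith [mul_nonneg (sub_nonneg.mpr hj2) (sub_nonneg.mpr (Int.le_sub_one_of_lt hjn))]

theorem no_root_k1_neg_case_b_general (p q : ℤ) (hp5 : 5 ≤ p)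
    (hq : 2 ≤ q) :
    ¬ ∃ j : ℤ, 0 ≤ j ∧ j ≤ p * q ∧
      j ^ 2 - (p * q + 1) * j + p + p * q + 1 = 0 := by
  rintro ⟨j, hj0, hjn, hroot⟩
  have hprod : j * (p * q + 1 - j) = p * q + p + 1 := by linear_combination -hroot
  have hn : 2 * p ≤ p * q := by nlinarith
  rcases Int.mul_add_one_sub_le_or_two_mul_sub_one_le hj0 hjn with h | h <;> linarith

/-- For `p ≥ 5` prime and `q ≥ 2` even, the quadratic
`j² - (pq+1)·j + p + pq + 1` has no integer root in `[0, pq]`. -/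
theorem no_root_k1_neg_case_b (p q : ℤ) (hp : Prime p) (hp5 : 5 ≤ p)
    (hq : 2 ≤ q) (hqeven : Even q) :
    ¬ ∃ j : ℤ, 0 ≤ j ∧ j ≤ p * q ∧
      j ^ 2 - (p * q + 1) * j + p + p * q + 1 = 0 :=
  no_root_k1_neg_case_b_general p q hp5 hq
end

section
/- Let p ≥ 5 be a prime, let k be an integer with 2 ≤ k ≤ (p−1)/2, and let m ≥ k + 3 be an integer. Then there is no integer j with 0 ≤ j ≤ pm − k² − 1 satisfying j² − (pm − k²)·j + p + k² − mp = 0. -/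
/-! Writing `N = pm - k²`, the quadratic is `j (j - N) + (k² - p (m - 1))`. The first summand is
`≤ 0` for `0 ≤ j ≤ N`, and the second is negative because `p ≥ 2k + 1` and `m - 1 ≥ k + 2` give
`p (m - 1) ≥ (2k + 1)(k + 2) > k²`. -/

theorem mul_sub_add_neg_of_mem_Icc {R : Type*} [Ring R] [LinearOrder R] [IsStrictOrderedRing R]
    {j N c : R} (hj0 : 0 ≤ j) (hjN : j ≤ N) (hc : c < 0) :
    j * (j - N) + c < 0 :=
  add_neg_of_nonpos_of_neg (mul_nonpos_of_nonneg_of_nonpos hj0 (sub_nonpos.mpr hjN)) hc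

theorem sq_lt_mul_pred {R : Type*} [CommRing R] [LinearOrder R] [IsStrictOrderedRing R]
    {p k m : R} (hk : 0 ≤ k) (hp : 2 * k + 1 ≤ p) (hm : k + 3 ≤ m) :
    k ^ 2 < p * (m - 1) :=
  calc k ^ 2 < (2 * k + 1) * (k + 2) := by nlinarith
    _ ≤ p * (m - 1) := mul_le_mul hp (by linarith) (by linarith) (by linarith)

theorem no_root_eq26_general (p k m : ℤ)
    (hk2 : 2 ≤ k) (hk : k ≤ (p - 1) / 2) (hm : k + 3 ≤ m) :
    ¬ ∃ j : ℤ, 0 ≤ j ∧ j ≤ p * m - k ^ 2 - 1 ∧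
      j ^ 2 - (p * m - k ^ 2) * j + p + k ^ 2 - m * p = 0 := by
  rintro ⟨j, hj0, hjN, hroot⟩
  have hp : 2 * k + 1 ≤ p := by omega
  have hneg := mul_sub_add_neg_of_mem_Icc hj0 (by linarith : j ≤ p * m - k ^ 2)
    (sub_neg.mpr (sq_lt_mul_pred (by linarith) hp hm))
  have hquad : j ^ 2 - (p * m - k ^ 2) * j + p + k ^ 2 - m * p
      = j * (j - (p * m - k ^ 2)) + (k ^ 2 - p * (m - 1)) := by ring
  linarith

/-- Equation (26): for `p ≥ 5` prime, `2 ≤ k ≤ (p-1)/2` and `m ≥ k+3`, the quadratic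
`j² - (pm - k²)·j + p + k² - mp` has no integer root in `[0, pm - k² - 1]`. -/
theorem no_root_eq26 (p k m : ℤ) (hp : Prime p) (hp5 : 5 ≤ p)
    (hk2 : 2 ≤ k) (hk : k ≤ (p - 1) / 2) (hm : k + 3 ≤ m) :
    ¬ ∃ j : ℤ, 0 ≤ j ∧ j ≤ p * m - k ^ 2 - 1 ∧
      j ^ 2 - (p * m - k ^ 2) * j + p + k ^ 2 - m * p = 0 :=
  no_root_eq26_general p k m hk2 hk hm
end
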